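/- arXiv:0904.0625 — 2 statements merged into one kernel-verified Lean document; each statement's English description precedes it below -/
import Mathlib

section
/- Second derivative and convexity of the overlap: for α ∈ (0,1), assuming the integrals below are finite, the function α ↦ U(α) is twice differentiable at α with U″(α) = 2 ∫_Ω p₀(w)p₁(w)(p₁(w) − p₀(w))²/(α p₀(w) + β p₁(w))³ dw ≥ 0, where β = 1−α; in particular U is convex on (0,1). -/
/-!
Both derivatives come from differentiating under the integral sign. For fixed `w` the
denominator `a p₀ + (1 - a) p₁` is affine in `a`, so `a ↦ n / (a p₀ + (1 - a) p₁) ^ k`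
has derivative `k n (p₁ - p₀) / (a p₀ + (1 - a) p₁) ^ (k + 1)`. For
`|a - α| < min α (1 - α) / 2` the denominator is at least half its value at `α`, so this
derivative is dominated by `2 ^ (k + 1)` times its (integrable) value at `α`. The second
derivative has a nonnegative integrand, which gives convexity.
-/

open MeasureTheory Real Set

/-- The overlap integral `U(α) = ∫_Ω p₀ p₁ / (α p₀ + (1-α) p₁)`. -/
noncomputable def overlap (Ω : Set ℝ) (p₀ p₁ : ℝ → ℝ) (α : ℝ) : ℝ :=
  ∫ w in Ω, p₀ w * p₁ w / (α * p₀ w + (1 - α) * p₁ w)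

/-- The integral expression for the first derivative of the overlap. -/
noncomputable def overlapD1 (Ω : Set ℝ) (p₀ p₁ : ℝ → ℝ) (α : ℝ) : ℝ :=
  ∫ w in Ω, p₀ w * p₁ w * (p₁ w - p₀ w) / (α * p₀ w + (1 - α) * p₁ w) ^ 2

/-- The integral expression for the second derivative of the overlap. -/
noncomputable def overlapD2 (Ω : Set ℝ) (p₀ p₁ : ℝ → ℝ) (α : ℝ) : ℝ :=
  2 * ∫ w in Ω, p₀ w * p₁ w * (p₁ w - p₀ w) ^ 2 / (α * p₀ w + (1 - α) * p₁ w) ^ 3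

lemma mix_pos {x y a : ℝ} (hx : 0 ≤ x) (hy : 0 ≤ y) (ha : a ∈ Ioo (0 : ℝ) 1) (hxy : x ≠ y) :
    0 < a * x + (1 - a) * y := by
  obtain ⟨ha₀, ha₁⟩ := ha
  rcases hx.lt_or_eq with hx | rfl
  · nlinarith
  · simp only [mul_zero, zero_add]
    exact mul_pos (by linarith) (hy.lt_of_ne hxy)

lemma mix_le_two_mul_mix {x y α a : ℝ} (hx : 0 ≤ x) (hy : 0 ≤ y)
    (ha : a ∈ Metric.ball α (min α (1 - α) / 2)) :
    α * x + (1 - α) * y ≤ 2 * (a * x + (1 - a) * y) := by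
  rw [Metric.mem_ball, Real.dist_eq, abs_lt] at ha
  have h₀ : α ≤ 2 * a := by linarith [min_le_left α (1 - α)]
  have h₁ : 1 - α ≤ 2 * (1 - a) := by linarith [min_le_right α (1 - α)]
  nlinarith

lemma norm_div_pow_le_two_pow_mul (m : ℝ) {d e : ℝ} (hd : 0 < d) (hde : d ≤ 2 * e) (j : ℕ) :
    ‖m / e ^ j‖ ≤ 2 ^ j * ‖m / d ^ j‖ := by
  have he : 0 < e := by linarith
  calc ‖m / e ^ j‖ = ‖m‖ / e ^ j := by rw [norm_div, norm_pow, Real.norm_of_nonneg he.le]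
    _ ≤ ‖m‖ / (d / 2) ^ j :=
      div_le_div_of_nonneg_left (norm_nonneg m) (by positivity)
        (pow_le_pow_left₀ (by positivity) (by linarith) j)
    _ = 2 ^ j * ‖m / d ^ j‖ := by
      rw [norm_div, norm_pow, Real.norm_of_nonneg hd.le, div_pow]
      field_simp

/-- If `x = y` the function is constant and the formula gives `0`, so only a vanishing
denominator with `x ≠ y` (where `/` returns junk) has to be excluded. -/
lemma hasDerivAt_div_mix_pow (n x y : ℝ) (k : ℕ) {a : ℝ}
    (h : a * x + (1 - a) * y ≠ 0 ∨ x = y) :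
    HasDerivAt (fun b => n / (b * x + (1 - b) * y) ^ k)
      (k * (n * (y - x) / (a * x + (1 - a) * y) ^ (k + 1))) a := by
  rcases h with hD | rfl
  · have hlin : HasDerivAt (fun b => b * x + (1 - b) * y) (x - y) a :=
      (((hasDerivAt_id' a).mul_const x).add
        (((hasDerivAt_const a 1).sub (hasDerivAt_id' a)).mul_const y)).congr_deriv (by ring)
    refine ((hasDerivAt_const a n).div (hlin.fun_pow k) (pow_ne_zero k hD)).congr_deriv ?_
    rcases k with _ | k
    · simp
    · simp only [Nat.add_sub_cancel]
      field_simp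
      ring
  · simpa [← add_mul] using hasDerivAt_const a (n / x ^ k)

lemma convexOn_of_hasDerivAt2_nonneg {D : Set ℝ} (hD : Convex ℝ D) (hD_open : IsOpen D)
    {f f' f'' : ℝ → ℝ} (hf' : ∀ x ∈ D, HasDerivAt f (f' x) x)
    (hf'' : ∀ x ∈ D, HasDerivAt f' (f'' x) x) (hf''₀ : ∀ x ∈ D, 0 ≤ f'' x) :
    ConvexOn ℝ D f := by
  refine convexOn_of_hasDerivWithinAt2_nonneg (f' := f') (f'' := f'') hD
    (HasDerivAt.continuousOn hf') ?_ ?_ ?_ <;> rw [hD_open.interior_eq]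
  · exact fun x hx => (hf' x hx).hasDerivWithinAt
  · exact fun x hx => (hf'' x hx).hasDerivWithinAt
  · exact hf''₀

section DerivUnderIntegral

variable {X : Type*} [MeasurableSpace X] {μ : Measure X} {p₀ p₁ n : X → ℝ}

theorem hasDerivAt_integral_div_mix_pow (hp₀ : Measurable p₀) (hp₁ : Measurable p₁)
    (hn : Measurable n) (h₀ : ∀ w, 0 ≤ p₀ w) (h₁ : ∀ w, 0 ≤ p₁ w) (k : ℕ) {α : ℝ}
    (hα : α ∈ Ioo (0 : ℝ) 1)
    (hF : Integrable (fun w => n w / (α * p₀ w + (1 - α) * p₁ w) ^ k) μ)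
    (hF' : Integrable
      (fun w => n w * (p₁ w - p₀ w) / (α * p₀ w + (1 - α) * p₁ w) ^ (k + 1)) μ) :
    HasDerivAt (fun a => ∫ w, n w / (a * p₀ w + (1 - a) * p₁ w) ^ k ∂μ)
      (k * ∫ w, n w * (p₁ w - p₀ w) / (α * p₀ w + (1 - α) * p₁ w) ^ (k + 1) ∂μ) α := by
  set s := Metric.ball α (min α (1 - α) / 2)
  have hs : s ∈ nhds α :=
    Metric.ball_mem_nhds α (half_pos (lt_min hα.1 (sub_pos.2 hα.2)))
  have hs_sub : s ⊆ Ioo 0 1 := by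
    intro a ha
    rw [Metric.mem_ball, Real.dist_eq, abs_lt] at ha
    constructor <;> linarith [min_le_left α (1 - α), min_le_right α (1 - α)]
  set F' : ℝ → X → ℝ :=
    fun a w => k * (n w * (p₁ w - p₀ w) / (a * p₀ w + (1 - a) * p₁ w) ^ (k + 1))
  have h_bound : ∀ w, ∀ a ∈ s, ‖F' a w‖ ≤ 2 ^ (k + 1) * ‖F' α w‖ := by
    intro w a ha
    rcases eq_or_ne (p₀ w) (p₁ w) with heq | hne
    · simp [F', heq]
    · rw [norm_mul, norm_mul, mul_left_comm]
      exact mul_le_mul_of_nonneg_left (norm_div_pow_le_two_pow_mul _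
        (mix_pos (h₀ w) (h₁ w) hα hne) (mix_le_two_mul_mix (h₀ w) (h₁ w) ha) _) (norm_nonneg _)
  have h_diff : ∀ w, ∀ a ∈ s,
      HasDerivAt (fun b => n w / (b * p₀ w + (1 - b) * p₁ w) ^ k) (F' a w) a := by
    intro w a ha
    refine hasDerivAt_div_mix_pow _ _ _ k ?_
    rcases eq_or_ne (p₀ w) (p₁ w) with heq | hne
    · exact Or.inr heq
    · exact Or.inl (mix_pos (h₀ w) (h₁ w) (hs_sub ha) hne).ne'
  have hF'_int : Integrable (F' α) μ := hF'.const_mul k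
  rw [← integral_const_mul]
  exact (hasDerivAt_integral_of_dominated_loc_of_deriv_le hs
    (.of_forall fun a => Measurable.aestronglyMeasurable (by fun_prop))
    hF hF'_int.aestronglyMeasurable (.of_forall h_bound) (hF'_int.norm.const_mul _)
    (.of_forall h_diff)).2

end DerivUnderIntegral

section Overlap

variable {p₀ p₁ : ℝ → ℝ} {Ω : Set ℝ} {α : ℝ}

lemma hasDerivAt_overlap (hm0 : Measurable p₀) (hm1 : Measurable p₁)
    (hpos0 : ∀ w, 0 ≤ p₀ w) (hpos1 : ∀ w, 0 ≤ p₁ w) (hα : α ∈ Ioo (0 : ℝ) 1)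
    (hU : IntegrableOn (fun w => p₀ w * p₁ w / (α * p₀ w + (1 - α) * p₁ w)) Ω)
    (hD1 : IntegrableOn
      (fun w => p₀ w * p₁ w * (p₁ w - p₀ w) / (α * p₀ w + (1 - α) * p₁ w) ^ 2) Ω) :
    HasDerivAt (overlap Ω p₀ p₁) (overlapD1 Ω p₀ p₁ α) α := by
  unfold overlap overlapD1
  simpa using hasDerivAt_integral_div_mix_pow (n := fun w => p₀ w * p₁ w) hm0 hm1
    (by fun_prop) hpos0 hpos1 1 hα (by simpa only [pow_one, IntegrableOn] using hU) hD1

lemma hasDerivAt_overlapD1 (hm0 : Measurable p₀) (hm1 : Measurable p₁)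
    (hpos0 : ∀ w, 0 ≤ p₀ w) (hpos1 : ∀ w, 0 ≤ p₁ w) (hα : α ∈ Ioo (0 : ℝ) 1)
    (hD1 : IntegrableOn
      (fun w => p₀ w * p₁ w * (p₁ w - p₀ w) / (α * p₀ w + (1 - α) * p₁ w) ^ 2) Ω)
    (hD2 : IntegrableOn
      (fun w => p₀ w * p₁ w * (p₁ w - p₀ w) ^ 2 / (α * p₀ w + (1 - α) * p₁ w) ^ 3) Ω) :
    HasDerivAt (overlapD1 Ω p₀ p₁) (overlapD2 Ω p₀ p₁ α) α := by
  have hsq : ∀ a w, p₀ w * p₁ w * (p₁ w - p₀ w) * (p₁ w - p₀ w) /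
      (a * p₀ w + (1 - a) * p₁ w) ^ (2 + 1) =
      p₀ w * p₁ w * (p₁ w - p₀ w) ^ 2 / (a * p₀ w + (1 - a) * p₁ w) ^ 3 := by
    intro a w
    ring
  unfold overlapD1 overlapD2
  simpa only [hsq, Nat.cast_ofNat] using
    hasDerivAt_integral_div_mix_pow (n := fun w => p₀ w * p₁ w * (p₁ w - p₀ w)) hm0 hm1
      (by fun_prop) hpos0 hpos1 2 hα hD1 (by simpa only [hsq, IntegrableOn] using hD2)

lemma overlapD2_nonneg (hpos0 : ∀ w, 0 ≤ p₀ w) (hpos1 : ∀ w, 0 ≤ p₁ w)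
    (hα : α ∈ Icc (0 : ℝ) 1) : 0 ≤ overlapD2 Ω p₀ p₁ α :=
  mul_nonneg zero_le_two <| integral_nonneg fun w => div_nonneg
    (mul_nonneg (mul_nonneg (hpos0 w) (hpos1 w)) (sq_nonneg _))
    (pow_nonneg (add_nonneg (mul_nonneg hα.1 (hpos0 w))
      (mul_nonneg (sub_nonneg.2 hα.2) (hpos1 w))) 3)

end Overlap

theorem overlap_second_derivative_convex_general
    (p₀ p₁ : ℝ → ℝ) (Ω : Set ℝ)
    (hm0 : Measurable p₀) (hm1 : Measurable p₁)
    (hpos0 : ∀ w, 0 ≤ p₀ w) (hpos1 : ∀ w, 0 ≤ p₁ w)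
    (hUint : ∀ a ∈ Icc (0:ℝ) 1,
      IntegrableOn (fun w => p₀ w * p₁ w / (a * p₀ w + (1 - a) * p₁ w)) Ω)
    (hD1int : ∀ a ∈ Ioo (0:ℝ) 1, IntegrableOn
      (fun w => p₀ w * p₁ w * (p₁ w - p₀ w) / (a * p₀ w + (1 - a) * p₁ w) ^ 2) Ω)
    (hD2int : ∀ a ∈ Ioo (0:ℝ) 1, IntegrableOn
      (fun w => p₀ w * p₁ w * (p₁ w - p₀ w) ^ 2 / (a * p₀ w + (1 - a) * p₁ w) ^ 3) Ω) :
    (∀ α ∈ Ioo (0:ℝ) 1,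
      HasDerivAt (overlap Ω p₀ p₁) (overlapD1 Ω p₀ p₁ α) α ∧
      HasDerivAt (overlapD1 Ω p₀ p₁) (overlapD2 Ω p₀ p₁ α) α ∧
      0 ≤ overlapD2 Ω p₀ p₁ α) ∧
    ConvexOn ℝ (Ioo (0:ℝ) 1) (overlap Ω p₀ p₁) := by
  have hD1 : ∀ α ∈ Ioo (0:ℝ) 1, HasDerivAt (overlap Ω p₀ p₁) (overlapD1 Ω p₀ p₁ α) α :=
    fun α hα => hasDerivAt_overlap hm0 hm1 hpos0 hpos1 hα
      (hUint α (Ioo_subset_Icc_self hα)) (hD1int α hα)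
  have hD2 : ∀ α ∈ Ioo (0:ℝ) 1, HasDerivAt (overlapD1 Ω p₀ p₁) (overlapD2 Ω p₀ p₁ α) α :=
    fun α hα => hasDerivAt_overlapD1 hm0 hm1 hpos0 hpos1 hα (hD1int α hα) (hD2int α hα)
  have hD2_nonneg : ∀ α ∈ Ioo (0:ℝ) 1, 0 ≤ overlapD2 Ω p₀ p₁ α :=
    fun α hα => overlapD2_nonneg hpos0 hpos1 (Ioo_subset_Icc_self hα)
  exact ⟨fun α hα => ⟨hD1 α hα, hD2 α hα, hD2_nonneg α hα⟩,
    convexOn_of_hasDerivAt2_nonneg (convex_Ioo 0 1) isOpen_Ioo hD1 hD2 hD2_nonneg⟩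

/-- Second derivative and convexity of the overlap: for `α ∈ (0,1)`, assuming the
relevant integrals are finite, `α ↦ U(α)` is twice differentiable at `α` with
`U''(α) = 2 ∫_Ω p₀ p₁ (p₁ - p₀)² / (α p₀ + (1-α) p₁)³ dw ≥ 0`; in particular `U` is
convex on `(0,1)`. -/
theorem overlap_second_derivative_convex
    (p₀ p₁ : ℝ → ℝ) (Ω : Set ℝ)
    (hm0 : Measurable p₀) (hm1 : Measurable p₁)
    (hpos0 : ∀ w, 0 ≤ p₀ w) (hpos1 : ∀ w, 0 ≤ p₁ w)
    (hnorm0 : ∫ w, p₀ w = 1) (hnorm1 : ∫ w, p₁ w = 1)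
    (hΩ0 : Ω = {w | 0 < p₀ w}) (hΩ1 : Ω = {w | 0 < p₁ w})
    (hUint : ∀ a ∈ Icc (0:ℝ) 1,
      IntegrableOn (fun w => p₀ w * p₁ w / (a * p₀ w + (1 - a) * p₁ w)) Ω)
    (hD1int : ∀ a ∈ Ioo (0:ℝ) 1, IntegrableOn
      (fun w => p₀ w * p₁ w * (p₁ w - p₀ w) / (a * p₀ w + (1 - a) * p₁ w) ^ 2) Ω)
    (hD2int : ∀ a ∈ Ioo (0:ℝ) 1, IntegrableOn
      (fun w => p₀ w * p₁ w * (p₁ w - p₀ w) ^ 2 / (a * p₀ w + (1 - a) * p₁ w) ^ 3) Ω) :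
    (∀ α ∈ Ioo (0:ℝ) 1,
      HasDerivAt (overlap Ω p₀ p₁) (overlapD1 Ω p₀ p₁ α) α ∧
      HasDerivAt (overlapD1 Ω p₀ p₁) (overlapD2 Ω p₀ p₁ α) α ∧
      0 ≤ overlapD2 Ω p₀ p₁ α) ∧
    ConvexOn ℝ (Ioo (0:ℝ) 1) (overlap Ω p₀ p₁) :=
  overlap_second_derivative_convex_general p₀ p₁ Ω hm0 hm1 hpos0 hpos1 hUint hD1int hD2int
end

section
/- Derivative of the rescaled asymptotic mean square error: for α ∈ (0,1) with β = 1−α and p = α p₀ + β p₁, assuming the relevant integrals are finite, the function M(α) = (1/(αβ))(1/U(α) − 1) is differentiable at α with M′(α) = Var₁(p₀/p)/(β² U(α)²) − Var₀(p₁/p)/(α² U(α)²). -/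
open MeasureTheory Real Set

/-- The rescaled asymptotic mean square error `M(α) = (1/(α(1-α)))(1/U(α) - 1)`. -/
noncomputable def mseM (Ω : Set ℝ) (p₀ p₁ : ℝ → ℝ) (α : ℝ) : ℝ :=
  (1 / (α * (1 - α))) * (1 / overlap Ω p₀ p₁ α - 1)

/-- The mean `⟨g⟩_q = ∫_Ω g q` of `g` with respect to the density `q` on `Ω`. -/
noncomputable def wMean (Ω : Set ℝ) (q g : ℝ → ℝ) : ℝ :=
  ∫ w in Ω, g w * q w

/-- The variance `Var_q(g) = ⟨(g - ⟨g⟩_q)²⟩_q` of `g` with respect to the density `q`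
on `Ω`. -/
noncomputable def wVar (Ω : Set ℝ) (q g : ℝ → ℝ) : ℝ :=
  ∫ w in Ω, (g w - wMean Ω q g) ^ 2 * q w

/-!
Differentiate `U` under the integral sign: while `a` and `1 - a` both stay above some `c > 0`,
the mixture `a p₀ + (1 - a) p₁` is at least `c` times the mixture at `α`, so the derivative
integrand is dominated by `c⁻²` times its (integrable) value at `α`. Pointwise algebra rewrites
`U' = ∫ p₀ p₁ (p₁ - p₀) / p²` through `U` and the second moments `∫ (p₀/p)² p₁`, `∫ (p₁/p)² p₀`.
Since `p₀/p` has mean `U` under `p₁` and `p₁/p` has mean `U` under `p₀`, these second moments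
are `Var + U²`, and the quotient rule applied to `M` gives the formula.
-/

section Mixture

variable {u v a b c : ℝ}

lemma eq_zero_of_mix_eq_zero (hu : 0 ≤ u) (hv : 0 ≤ v) (ha : a ∈ Ioo (0 : ℝ) 1)
    (h : a * u + (1 - a) * v = 0) : u = 0 ∧ v = 0 := by
  obtain ⟨ha0, ha1⟩ := ha
  constructor <;> nlinarith [mul_nonneg ha0.le hu, mul_nonneg (sub_nonneg.2 ha1.le) hv]

lemma hasDerivAt_mul_div_mix (hu : 0 ≤ u) (hv : 0 ≤ v) (ha : a ∈ Ioo (0 : ℝ) 1) :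
    HasDerivAt (fun b => u * v / (b * u + (1 - b) * v))
      (u * v * (v - u) / (a * u + (1 - a) * v) ^ 2) a := by
  by_cases hD : a * u + (1 - a) * v = 0
  · obtain ⟨rfl, rfl⟩ := eq_zero_of_mix_eq_zero hu hv ha hD
    simpa using hasDerivAt_const a (0 : ℝ)
  have hmix : HasDerivAt (fun b => b * u + (1 - b) * v) (u - v) a :=
    (((hasDerivAt_id a).mul_const u).add
      (((hasDerivAt_id a).const_sub 1).mul_const v)).congr_deriv (by ring)
  exact ((hasDerivAt_const a (u * v)).div hmix hD).congr_deriv (by ring)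

lemma mul_mix_le_mix (hu : 0 ≤ u) (hv : 0 ≤ v) (hca : c ≤ a) (hcb : c ≤ 1 - a) (hc : 0 ≤ c)
    (hb : b ∈ Icc (0 : ℝ) 1) : c * (b * u + (1 - b) * v) ≤ a * u + (1 - a) * v := by
  obtain ⟨hb0, hb1⟩ := hb
  nlinarith [mul_nonneg (mul_nonneg hc hb0) hv, mul_nonneg (mul_nonneg hc (sub_nonneg.2 hb1)) hu,
    mul_nonneg (sub_nonneg.2 hca) hu, mul_nonneg (sub_nonneg.2 hcb) hv]

lemma abs_mul_div_mix_sq_le (hu : 0 ≤ u) (hv : 0 ≤ v) (hca : c ≤ a) (hcb : c ≤ 1 - a)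
    (hc : 0 < c) (hb : b ∈ Ioo (0 : ℝ) 1) :
    |u * v * (v - u) / (a * u + (1 - a) * v) ^ 2|
      ≤ |u * v * (v - u) / (b * u + (1 - b) * v) ^ 2| / c ^ 2 := by
  rcases (add_nonneg (mul_nonneg hb.1.le hu) (mul_nonneg (sub_nonneg.2 hb.2.le) hv)).eq_or_lt
    with hD | hD
  · obtain ⟨rfl, rfl⟩ := eq_zero_of_mix_eq_zero hu hv hb hD.symm
    simp
  have hle := mul_mix_le_mix hu hv hca hcb hc.le (Ioo_subset_Icc_self hb)
  rw [abs_div, abs_div, abs_of_nonneg (sq_nonneg (a * u + _)),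
    abs_of_nonneg (sq_nonneg (b * u + _)), div_div, ← mul_pow, mul_comm _ c]
  gcongr

lemma mul_div_mix_sq_eq (ha0 : a ≠ 0) (ha1 : 1 - a ≠ 0) :
    u * v * (v - u) / (a * u + (1 - a) * v) ^ 2
      = (1 / (1 - a) - 1 / a) * (u * v / (a * u + (1 - a) * v))
        - a / (1 - a) * ((u / (a * u + (1 - a) * v)) ^ 2 * v)
        + (1 - a) / a * ((v / (a * u + (1 - a) * v)) ^ 2 * u) := by
  by_cases hD : a * u + (1 - a) * v = 0
  · simp [hD]
  field_simp
  ring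

end Mixture

section Integral

variable {X : Type*} [MeasurableSpace X] {μ : Measure X}

lemma setIntegral_pos_eq_integral {p : X → ℝ} (hp : ∀ x, 0 ≤ p x) :
    ∫ x in {x | 0 < p x}, p x ∂μ = ∫ x, p x ∂μ :=
  setIntegral_eq_integral_of_forall_compl_eq_zero fun x hx => le_antisymm (not_lt.1 hx) (hp x)

lemma integral_sub_integral_sq_mul {q g : X → ℝ} (hq : Integrable q μ) (hq1 : ∫ x, q x ∂μ = 1)
    (hgq : Integrable (fun x => g x * q x) μ) (hg2q : Integrable (fun x => g x ^ 2 * q x) μ) :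
    ∫ x, (g x - ∫ y, g y * q y ∂μ) ^ 2 * q x ∂μ
      = ∫ x, g x ^ 2 * q x ∂μ - (∫ x, g x * q x ∂μ) ^ 2 := by
  set m := ∫ y, g y * q y ∂μ
  have hexp : ∀ x, (g x - m) ^ 2 * q x = g x ^ 2 * q x - 2 * m * (g x * q x) + m ^ 2 * q x :=
    fun x => by ring
  simp only [hexp]
  rw [integral_add (f := fun x => g x ^ 2 * q x - 2 * m * (g x * q x))
      (hg2q.sub (hgq.const_mul _)) (hq.const_mul _),
    integral_sub hg2q (hgq.const_mul _), integral_const_mul, integral_const_mul, hq1]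
  ring

variable {p₀ p₁ : X → ℝ} {α : ℝ}

lemma hasDerivAt_integral_mul_div_mix (hm0 : Measurable p₀) (hm1 : Measurable p₁)
    (hpos0 : ∀ x, 0 ≤ p₀ x) (hpos1 : ∀ x, 0 ≤ p₁ x) (hα : α ∈ Ioo (0 : ℝ) 1)
    (hint : Integrable (fun x => p₀ x * p₁ x / (α * p₀ x + (1 - α) * p₁ x)) μ)
    (hint' : Integrable
      (fun x => p₀ x * p₁ x * (p₁ x - p₀ x) / (α * p₀ x + (1 - α) * p₁ x) ^ 2) μ) :
    HasDerivAt (fun a => ∫ x, p₀ x * p₁ x / (a * p₀ x + (1 - a) * p₁ x) ∂μ)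
      (∫ x, p₀ x * p₁ x * (p₁ x - p₀ x) / (α * p₀ x + (1 - α) * p₁ x) ^ 2 ∂μ) α := by
  obtain ⟨c, hc_def⟩ : ∃ c, c = min α (1 - α) / 2 := ⟨_, rfl⟩
  have hc : 0 < c := by have := lt_min hα.1 (sub_pos.2 hα.2); rw [hc_def]; positivity
  have hball : ∀ a ∈ Metric.ball α c, c ≤ a ∧ c ≤ 1 - a ∧ a ∈ Ioo (0 : ℝ) 1 := by
    intro a ha
    rw [Metric.mem_ball, Real.dist_eq, abs_lt] at ha
    have := min_le_left α (1 - α)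
    have := min_le_right α (1 - α)
    refine ⟨by linarith, by linarith, by linarith, by linarith⟩
  refine (hasDerivAt_integral_of_dominated_loc_of_deriv_le (Metric.ball_mem_nhds α hc)
    (F := fun a x => p₀ x * p₁ x / (a * p₀ x + (1 - a) * p₁ x))
    (F' := fun a x => p₀ x * p₁ x * (p₁ x - p₀ x) / (a * p₀ x + (1 - a) * p₁ x) ^ 2)
    (.of_forall fun a => (by fun_prop : Measurable _).aestronglyMeasurable) hint
    hint'.aestronglyMeasurable
    (bound := fun x => |p₀ x * p₁ x * (p₁ x - p₀ x) / (α * p₀ x + (1 - α) * p₁ x) ^ 2| / c ^ 2)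
    ?_ (hint'.abs.div_const _) ?_).2
  · filter_upwards with x a ha
    obtain ⟨hca, hcb, -⟩ := hball a ha
    exact abs_mul_div_mix_sq_le (hpos0 x) (hpos1 x) hca hcb hc hα
  · filter_upwards with x a ha
    exact hasDerivAt_mul_div_mix (hpos0 x) (hpos1 x) (hball a ha).2.2

lemma integral_mul_div_mix_sq_eq (hα0 : α ≠ 0) (hα1 : 1 - α ≠ 0)
    (hint : Integrable (fun x => p₀ x * p₁ x / (α * p₀ x + (1 - α) * p₁ x)) μ)
    (hsq0 : Integrable (fun x => (p₁ x / (α * p₀ x + (1 - α) * p₁ x)) ^ 2 * p₀ x) μ)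
    (hsq1 : Integrable (fun x => (p₀ x / (α * p₀ x + (1 - α) * p₁ x)) ^ 2 * p₁ x) μ) :
    ∫ x, p₀ x * p₁ x * (p₁ x - p₀ x) / (α * p₀ x + (1 - α) * p₁ x) ^ 2 ∂μ
      = (1 / (1 - α) - 1 / α) * ∫ x, p₀ x * p₁ x / (α * p₀ x + (1 - α) * p₁ x) ∂μ
        - α / (1 - α) * ∫ x, (p₀ x / (α * p₀ x + (1 - α) * p₁ x)) ^ 2 * p₁ x ∂μ
        + (1 - α) / α * ∫ x, (p₁ x / (α * p₀ x + (1 - α) * p₁ x)) ^ 2 * p₀ x ∂μ := by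
  simp only [mul_div_mix_sq_eq hα0 hα1]
  rw [integral_add
      (f := fun x => (1 / (1 - α) - 1 / α) * (p₀ x * p₁ x / (α * p₀ x + (1 - α) * p₁ x))
        - α / (1 - α) * ((p₀ x / (α * p₀ x + (1 - α) * p₁ x)) ^ 2 * p₁ x))
      ((hint.const_mul _).sub (hsq1.const_mul _)) (hsq0.const_mul _),
    integral_sub (hint.const_mul _) (hsq1.const_mul _), integral_const_mul, integral_const_mul,
    integral_const_mul]

end Integral

lemma wVar_eq_sub_wMean_sq {Ω : Set ℝ} {q g : ℝ → ℝ} (hq : IntegrableOn q Ω)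
    (hq1 : ∫ w in Ω, q w = 1) (hgq : IntegrableOn (fun w => g w * q w) Ω)
    (hg2q : IntegrableOn (fun w => g w ^ 2 * q w) Ω) :
    wVar Ω q g = (∫ w in Ω, g w ^ 2 * q w) - wMean Ω q g ^ 2 :=
  integral_sub_integral_sq_mul hq hq1 hgq hg2q

lemma hasDerivAt_one_div_mul_one_div_sub_one {U : ℝ → ℝ} {α S₀ S₁ : ℝ} (hα : α ∈ Ioo (0 : ℝ) 1)
    (hU : U α ≠ 0)
    (h : HasDerivAt U ((1 / (1 - α) - 1 / α) * U α - α / (1 - α) * S₁ + (1 - α) / α * S₀) α) :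
    HasDerivAt (fun a => 1 / (a * (1 - a)) * (1 / U a - 1))
      ((S₁ - U α ^ 2) / ((1 - α) ^ 2 * U α ^ 2) - (S₀ - U α ^ 2) / (α ^ 2 * U α ^ 2)) α := by
  have hα0 : α ≠ 0 := hα.1.ne'
  have hα1 : 1 - α ≠ 0 := (sub_pos.2 hα.2).ne'
  have hprod : HasDerivAt (fun a : ℝ => a * (1 - a)) (1 - 2 * α) α :=
    ((hasDerivAt_id α).mul ((hasDerivAt_id α).const_sub 1)).congr_deriv (by simp; ring)
  refine (((hasDerivAt_const α 1).div hprod (mul_ne_zero hα0 hα1)).mul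
    (((hasDerivAt_const α 1).div h hU).sub_const 1)).congr_deriv ?_
  simp only [Pi.div_apply]
  field_simp
  ring

/-- Derivative of the rescaled asymptotic mean square error: for `α ∈ (0,1)` with
`β = 1 - α` and `p = α p₀ + β p₁`, assuming the relevant integrals are finite,
`M(α) = (1/(αβ))(1/U(α) - 1)` is differentiable at `α` with
`M'(α) = Var₁(p₀/p)/(β² U(α)²) - Var₀(p₁/p)/(α² U(α)²)`. -/
theorem mse_hasDerivAt
    (p₀ p₁ : ℝ → ℝ) (Ω : Set ℝ)
    (hm0 : Measurable p₀) (hm1 : Measurable p₁)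
    (hpos0 : ∀ w, 0 ≤ p₀ w) (hpos1 : ∀ w, 0 ≤ p₁ w)
    (hnorm0 : ∫ w, p₀ w = 1) (hnorm1 : ∫ w, p₁ w = 1)
    (hΩ0 : Ω = {w | 0 < p₀ w}) (hΩ1 : Ω = {w | 0 < p₁ w})
    (α : ℝ) (hα : α ∈ Ioo (0:ℝ) 1)
    (hUpos : ∀ a ∈ Ioo (0:ℝ) 1, 0 < overlap Ω p₀ p₁ a)
    (hUint : ∀ a ∈ Ioo (0:ℝ) 1,
      IntegrableOn (fun w => p₀ w * p₁ w / (a * p₀ w + (1 - a) * p₁ w)) Ω)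
    (hU'int : ∀ a ∈ Ioo (0:ℝ) 1, IntegrableOn
      (fun w => p₀ w * p₁ w * (p₁ w - p₀ w) / (a * p₀ w + (1 - a) * p₁ w) ^ 2) Ω)
    (hsq0 : IntegrableOn
      (fun w => (p₁ w / (α * p₀ w + (1 - α) * p₁ w)) ^ 2 * p₀ w) Ω)
    (hsq1 : IntegrableOn
      (fun w => (p₀ w / (α * p₀ w + (1 - α) * p₁ w)) ^ 2 * p₁ w) Ω) :
    HasDerivAt (mseM Ω p₀ p₁)
      (wVar Ω p₁ (fun w => p₀ w / (α * p₀ w + (1 - α) * p₁ w))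
          / ((1 - α) ^ 2 * overlap Ω p₀ p₁ α ^ 2)
        - wVar Ω p₀ (fun w => p₁ w / (α * p₀ w + (1 - α) * p₁ w))
          / (α ^ 2 * overlap Ω p₀ p₁ α ^ 2))
      α := by
  have hint0 : Integrable p₀ := .of_integral_ne_zero (by simp [hnorm0])
  have hint1 : Integrable p₁ := .of_integral_ne_zero (by simp [hnorm1])
  have hmass0 : ∫ w in Ω, p₀ w = 1 := by rw [hΩ0, setIntegral_pos_eq_integral hpos0, hnorm0]
  have hmass1 : ∫ w in Ω, p₁ w = 1 := by rw [hΩ1, setIntegral_pos_eq_integral hpos1, hnorm1]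
  have hU := hUint α hα
  have hg0 : (fun w => p₁ w / (α * p₀ w + (1 - α) * p₁ w) * p₀ w)
      = fun w => p₀ w * p₁ w / (α * p₀ w + (1 - α) * p₁ w) := by funext w; ring
  have hg1 : (fun w => p₀ w / (α * p₀ w + (1 - α) * p₁ w) * p₁ w)
      = fun w => p₀ w * p₁ w / (α * p₀ w + (1 - α) * p₁ w) := by funext w; ring
  have hmean0 : wMean Ω p₀ (fun w => p₁ w / (α * p₀ w + (1 - α) * p₁ w)) = overlap Ω p₀ p₁ α := by
    unfold wMean overlap; rw [hg0]
  have hmean1 : wMean Ω p₁ (fun w => p₀ w / (α * p₀ w + (1 - α) * p₁ w)) = overlap Ω p₀ p₁ α := by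
    unfold wMean overlap; rw [hg1]
  rw [wVar_eq_sub_wMean_sq hint0.integrableOn hmass0 (hg0 ▸ hU) hsq0,
    wVar_eq_sub_wMean_sq hint1.integrableOn hmass1 (hg1 ▸ hU) hsq1,
    hmean0, hmean1]
  have hderiv := hasDerivAt_integral_mul_div_mix hm0 hm1 hpos0 hpos1 hα hU (hU'int α hα)
  rw [integral_mul_div_mix_sq_eq hα.1.ne' (sub_pos.2 hα.2).ne' hU hsq0 hsq1] at hderiv
  unfold mseM
  exact hasDerivAt_one_div_mul_one_div_sub_one (U := overlap Ω p₀ p₁) hα (hUpos α hα).ne' hderiv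
end
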